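/- Let N be a rooted phylogenetic network on X with vertex set V. Then N is tree-based if and only if for every subset U of V there exists a set of pairwise vertex-disjoint directed paths in N, each ending at a leaf in X, such that each element of U lies on exactly one of the paths. -/

import Mathlib

open Relation

/-- Out-degree of a vertex in a digraph given by its arc relation. -/
noncomputable def outDeg {V : Type*} (A : V → V → Prop) (v : V) : ℕ := {u | A v u}.ncard
/-- In-degree of a vertex in a digraph given by its arc relation. -/
noncomputable def inDeg {V : Type*} (A : V → V → Prop) (v : V) : ℕ := {u | A u v}.ncard

/-- A rooted phylogenetic network on leaf set `X`. -/
structure PhyloNet (V : Type*) [Fintype V] [DecidableEq V] where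
  Arc : V → V → Prop
  root : V
  X : Finset V
  acyclic : ∀ v, ¬ Relation.TransGen Arc v v
  reach : ∀ v, Relation.ReflTransGen Arc root v
  root_out : 1 ≤ outDeg Arc root
  leaf_iff : ∀ v, v ∈ X ↔ outDeg Arc v = 0
  leaf_in : ∀ v ∈ X, inDeg Arc v = 1
  internal : ∀ v, v ≠ root → v ∉ X →
    (inDeg Arc v = 1 ∧ 2 ≤ outDeg Arc v) ∨ (2 ≤ inDeg Arc v ∧ outDeg Arc v = 1)

section Defs
variable {V : Type*} [Fintype V] [DecidableEq V]

/-- A reticulation: in-degree at least two. -/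
def IsRetic (N : PhyloNet V) (v : V) : Prop := 2 ≤ inDeg N.Arc v
/-- A tree vertex: a non-leaf vertex of in-degree at most one. -/
def IsTreeVert (N : PhyloNet V) (v : V) : Prop := v ∉ N.X ∧ inDeg N.Arc v ≤ 1
/-- An omnian: a non-leaf vertex all of whose children are reticulations. -/
def IsOmnian (N : PhyloNet V) (v : V) : Prop := v ∉ N.X ∧ ∀ u, N.Arc v u → IsRetic N u
/-- A binary network: all in- and out-degrees are at most two. -/
def IsBinary (N : PhyloNet V) : Prop := ∀ v : V, inDeg N.Arc v ≤ 2 ∧ outDeg N.Arc v ≤ 2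

/-- A rooted spanning tree of `N` with the same root as `N`. -/
def IsRSTree (N : PhyloNet V) (T : V → V → Prop) : Prop :=
  (∀ u v, T u v → N.Arc u v) ∧ (∀ v, inDeg T v = 0 ↔ v = N.root) ∧
  (∀ v, v ≠ N.root → inDeg T v = 1)

/-- A support tree: a rooted spanning tree with the same root, all of whose leaves are in `X`. -/
def IsSupportTree (N : PhyloNet V) (T : V → V → Prop) : Prop :=
  IsRSTree N T ∧ ∀ v, outDeg T v = 0 → v ∈ N.X

/-- Tree-based network. -/
def TreeBased (N : PhyloNet V) : Prop := ∃ T, IsSupportTree N T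

/-- A (nonempty, repetition-free) directed path recorded as a list of vertices. -/
def IsPathIn (A : V → V → Prop) (p : List V) : Prop := p ≠ [] ∧ p.Chain' A ∧ p.Nodup
/-- The path ends at a vertex of `X`. -/
def EndsIn (X : Finset V) (p : List V) : Prop := ∃ x ∈ X, p.getLast? = some x
/-- Pairwise vertex-disjoint family of paths. -/
def PairwiseDisj (P : Finset (List V)) : Prop :=
  ∀ p ∈ P, ∀ q ∈ P, p ≠ q → ∀ v : V, v ∈ p → v ∉ q
/-- A partition of the vertex set of `N` into vertex-disjoint directed paths
ending at leaves in `X`. -/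
def IsPathPartition (N : PhyloNet V) (P : Finset (List V)) : Prop :=
  (∀ p ∈ P, IsPathIn N.Arc p ∧ EndsIn N.X p) ∧ PairwiseDisj P ∧ ∀ v : V, ∃ p ∈ P, v ∈ p

/-- A matching in the bipartite graph with edge set `E` (edges from a first copy of `V`
to a second copy of `V`), recorded as a set of edges no two of which share an endpoint. -/
def IsMatchingOn (E : V → V → Prop) (M : Finset (V × V)) : Prop :=
  (∀ e ∈ M, E e.1 e.2) ∧ ∀ e ∈ M, ∀ f ∈ M, (e.1 = f.1 ∨ e.2 = f.2) → e = f

/-- Size of a maximum matching of the bipartite graph with edge set `E`. -/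
noncomputable def maxMatching (E : V → V → Prop) : ℕ :=
  sSup {n | ∃ M : Finset (V × V), IsMatchingOn E M ∧ M.card = n}

/-- An antichain of vertices of `N`. -/
def AntichainIn (N : PhyloNet V) (S : Finset V) : Prop :=
  ∀ u ∈ S, ∀ v ∈ S, u ≠ v → ¬ Relation.TransGen N.Arc u v

/-- The antichain-to-leaf property: from every antichain there are pairwise
vertex-disjoint directed paths to leaves, one starting at each antichain element. -/
def AntichainToLeaf (N : PhyloNet V) : Prop :=
  ∀ S : Finset V, AntichainIn N S →
    ∃ f : V → List V,
      (∀ s ∈ S, IsPathIn N.Arc (f s) ∧ (f s).head? = some s ∧ EndsIn N.X (f s)) ∧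
      ∀ s ∈ S, ∀ t ∈ S, s ≠ t → ∀ v : V, v ∈ f s → v ∉ f t

/-- A temporal network: a real labelling strictly increasing along tree arcs and
constant along reticulation arcs. -/
def Temporal (N : PhyloNet V) : Prop :=
  ∃ l : V → ℝ, ∀ u v, N.Arc u v →
    (IsRetic N v → l u = l v) ∧ (¬ IsRetic N v → l u < l v)

/-- `N'` is a binary refinement of `N`, witnessed by the contraction map `φ`:
`N` is obtained from the binary network `N'` by contracting the arcs whose endpoints
are identified by `φ`. -/
def IsBinRefinement {V' : Type*} [Fintype V'] [DecidableEq V']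
    (N' : PhyloNet V') (N : PhyloNet V) (φ : V' → V) : Prop :=
  IsBinary N' ∧ Function.Surjective φ ∧ φ N'.root = N.root ∧
  N'.X.image φ = N.X ∧ Set.InjOn φ ↑N'.X ∧
  (∀ u v : V, N.Arc u v ↔ ∃ u' v', φ u' = u ∧ φ v' = v ∧ N'.Arc u' v' ∧ φ u' ≠ φ v') ∧
  (∀ a b : V', φ a = φ b →
    Relation.ReflTransGen (fun x y => (N'.Arc x y ∨ N'.Arc y x) ∧ φ x = φ y) a b)

/-- Edge of the bipartite graph `B_N` between omnians and reticulations. -/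
def BEdge (N : PhyloNet V) (o r : V) : Prop := IsOmnian N o ∧ IsRetic N r ∧ N.Arc o r
/-- Edge of the bipartite graph `Z_N` between tree vertices with a reticulation child
and reticulations. -/
def ZEdge (N : PhyloNet V) (t r : V) : Prop :=
  IsTreeVert N t ∧ (∃ r', N.Arc t r' ∧ IsRetic N r') ∧ IsRetic N r ∧ N.Arc t r

/-- `R_t`: reticulations with no reticulation parent. -/
def Rt (N : PhyloNet V) (v : V) : Prop := IsRetic N v ∧ ∀ u, N.Arc u v → ¬ IsRetic N u
/-- `Q_t`: vertices with a child in `R_t`. -/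
def Qt (N : PhyloNet V) (v : V) : Prop := ∃ r, N.Arc v r ∧ Rt N r
/-- Edge of the bipartite graph `J_N`. -/
def JEdge (N : PhyloNet V) (q r : V) : Prop := Qt N q ∧ Rt N r ∧ N.Arc q r

/-- A supporting set for `J_N`. -/
def IsSupportingSet (N : PhyloNet V) (E : Finset (V × V)) : Prop :=
  (∀ e ∈ E, JEdge N e.1 e.2) ∧
  (∀ q, Qt N q → IsOmnian N q → ∃ e ∈ E, e.1 = q) ∧
  (∀ r, Rt N r → ∃! e : V × V, e ∈ E ∧ e.2 = r)

/-- An arboreal arc: `u` is a reticulation, or `v` is a tree vertex or a leaf. -/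
def ArborealArc (N : PhyloNet V) (u v : V) : Prop :=
  N.Arc u v ∧ (IsRetic N u ∨ ¬ IsRetic N v)

/-- The number of support trees of `N`, identified with their arc sets. -/
noncomputable def supCount (N : PhyloNet V) : ℕ :=
  {A' : Finset (V × V) | IsSupportTree N (fun u v => (u, v) ∈ A')}.ncard

/-- The bipartite graph `J_N`, as a simple graph on `Q_t ∪ R_t`. -/
def Jgraph (N : PhyloNet V) : SimpleGraph {v : V // Qt N v ∨ Rt N v} where
  Adj a b := JEdge N a.1 b.1 ∨ JEdge N b.1 a.1
  symm := ⟨by intro a b h; tauto⟩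
  loopless :=
    ⟨by rintro a (⟨_, _, h⟩ | ⟨_, _, h⟩) <;> exact N.acyclic _ (Relation.TransGen.single h)⟩

/-- Degree in `J_N`. -/
noncomputable def Jdeg (N : PhyloNet V) (a : {v : V // Qt N v ∨ Rt N v}) : ℕ :=
  ((Jgraph N).neighborSet a).ncard

end Defs

/-- A rooted tree (equivalently, a subdivision of a rooted tree): a rooted digraph
in which every non-root vertex has in-degree one and everything is reachable
from the root. -/
structure RootedDirTree (V : Type*) [Fintype V] [DecidableEq V] where
  Arc : V → V → Prop
  root : V
  acyclic : ∀ v, ¬ Relation.TransGen Arc v v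
  reach : ∀ v, Relation.ReflTransGen Arc root v
  root_in : inDeg Arc root = 0
  in_one : ∀ v, v ≠ root → inDeg Arc v = 1

/-!
A support tree `T` yields a partition of `V` into leaf-ending paths: pick for every non-leaf `v`
a `T`-child `c v`. Since `T` has in-degree at most one, `c` is injective off `X`, so the
`c`-orbits started at the vertices that are not `c` of a non-leaf, stopped on reaching `X`, are
disjoint paths ending in `X` and covering `V`. Conversely, given such paths through every
vertex (take `U = V`), make the parent of a non-root vertex its predecessor on its path, or any
parent in `N` if it starts its path. Every vertex then has one parent except the root, and a
non-leaf is not last on its path, so it is the parent of its successor there.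
-/

theorem Finite.wellFounded_of_not_transGen_self {V : Type*} [Finite V] {A : V → V → Prop}
    (hA : ∀ v, ¬ TransGen A v v) : WellFounded A := by
  have : IsTrans V (TransGen A) := ⟨fun _ _ _ => TransGen.trans⟩
  have : Std.Irrefl (TransGen A) := ⟨hA⟩
  exact (Finite.wellFounded_of_trans_of_irrefl _).mono fun _ _ => TransGen.single

namespace List

variable {α : Type*}

theorem IsChain.nodup_of_not_transGen_self {A : α → α → Prop} {l : List α} (hl : l.IsChain A)
    (hA : ∀ a, ¬ TransGen A a a) : l.Nodup :=
  (isChain_iff_pairwise.mp (hl.imp fun _ _ => TransGen.single)).imp (S := (· ≠ ·))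
    fun h e => by subst e; exact hA _ h

theorem isChain_iterate {A : α → α → Prop} {f : α → α} {a : α} {n : ℕ}
    (h : ∀ i < n, A (f^[i] a) (f^[i + 1] a)) : (iterate f a (n + 1)).IsChain A := by
  rw [← range_map_iterate, isChain_map, isChain_range_succ]
  exact h

theorem getLast?_iterate_succ (f : α → α) (a : α) (n : ℕ) :
    (iterate f a (n + 1)).getLast? = some (f^[n] a) := by
  rw [getLast?_eq_getElem?, length_iterate]
  exact getElem?_iterate f a _ _ (Nat.lt_succ_self n)

theorem Nodup.eq_of_pair_infix {l : List α} (hl : l.Nodup) {a b c : α}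
    (ha : [a, c] <:+: l) (hb : [b, c] <:+: l) : a = b := by
  obtain ⟨i, hi, hai⟩ := infix_iff_getElem?.mp ha
  obtain ⟨j, hj, hbj⟩ := infix_iff_getElem?.mp hb
  have hij : 1 + i = 1 + j := by
    have := (hai 1 (by simp)).trans (hbj 1 (by simp)).symm
    exact (getElem?_inj (by simp at hi; omega) hl).mp this
  have := hai 0 (by simp)
  rw [show 0 + i = 0 + j by omega, hbj 0 (by simp)] at this
  simpa using this.symm

theorem exists_pair_infix_of_getLast?_ne {l : List α} {a : α} (ha : a ∈ l)
    (hl : l.getLast? ≠ some a) : ∃ b, [a, b] <:+: l := by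
  induction l with
  | nil => simp at ha
  | cons x t ih =>
    cases t with
    | nil => simp_all
    | cons y t =>
      rcases mem_cons.mp ha with rfl | ha
      · exact ⟨y, ((prefix_cons_inj a).mpr ((prefix_cons_inj y).mpr nil_prefix)).isInfix⟩
      · obtain ⟨b, hb⟩ := ih ha (by simpa using hl)
        exact ⟨b, infix_cons hb⟩

end List

section SuccessorPaths

variable {V : Type*} {A : V → V → Prop} {c : V → V} {S : Set V}

theorem eq_of_iterate_eq_of_injOn (hc : Set.InjOn c S) {v w : V} (hv : v ∉ c '' S)
    (hw : w ∉ c '' S) {i j : ℕ} (hi : ∀ k < i, c^[k] v ∈ S) (hj : ∀ k < j, c^[k] w ∈ S)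
    (h : c^[i] v = c^[j] w) : v = w := by
  induction i generalizing j with
  | zero =>
    cases j with
    | zero => simpa using h
    | succ j =>
      rw [Function.iterate_succ_apply'] at h
      exact absurd ⟨_, hj j j.lt_succ_self, h.symm⟩ hv
  | succ i ih =>
    cases j with
    | zero =>
      rw [Function.iterate_succ_apply'] at h
      exact absurd ⟨_, hi i i.lt_succ_self, h⟩ hw
    | succ j =>
      rw [Function.iterate_succ_apply', Function.iterate_succ_apply'] at h
      exact ih (fun k hk => hi k (hk.trans i.lt_succ_self))
        (fun k hk => hj k (hk.trans j.lt_succ_self))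
        (hc (hi i i.lt_succ_self) (hj j j.lt_succ_self) h)

theorem exists_iterate_eq_of_wellFounded {r : V → V → Prop} (hr : WellFounded r)
    (hcr : ∀ w ∈ S, r w (c w)) (u : V) :
    ∃ v ∉ c '' S, ∃ i, (∀ k < i, c^[k] v ∈ S) ∧ c^[i] v = u := by
  induction u using hr.induction with
  | _ u ih =>
  by_cases hu : u ∈ c '' S
  · obtain ⟨w, hwS, rfl⟩ := hu
    obtain ⟨v, hv, i, hi, rfl⟩ := ih w (hcr w hwS)
    refine ⟨v, hv, i + 1, fun k hk => ?_, Function.iterate_succ_apply' c i v⟩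
    rcases Nat.lt_succ_iff_lt_or_eq.mp hk with hk | rfl
    exacts [hi k hk, hwS]
  · exact ⟨u, hu, 0, by simp, rfl⟩

theorem exists_iterate_notMem_of_wellFounded {r : V → V → Prop} (hr : WellFounded r)
    (hcr : ∀ v ∈ S, r (c v) v) (v : V) : ∃ n, c^[n] v ∉ S ∧ ∀ k < n, c^[k] v ∈ S := by
  classical
  have hexit : ∃ n, c^[n] v ∉ S := by
    induction v using hr.induction with
    | _ v ih =>
    by_cases hv : v ∈ S
    · obtain ⟨n, hn⟩ := ih (c v) (hcr v hv)
      exact ⟨n + 1, hn⟩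
    · exact ⟨0, hv⟩
  exact ⟨Nat.find hexit, Nat.find_spec hexit, fun k hk => not_not.mp (Nat.find_min hexit hk)⟩

theorem isPathIn_iterate (hA : ∀ v, ¬ TransGen A v v) (hcA : ∀ v ∈ S, A v (c v))
    {v : V} {n : ℕ} (h : ∀ k < n, c^[k] v ∈ S) : IsPathIn A (List.iterate c v (n + 1)) := by
  have hchain : (List.iterate c v (n + 1)).IsChain A := List.isChain_iterate fun i hi => by
    rw [Function.iterate_succ_apply']
    exact hcA _ (h i hi)
  exact ⟨by simp, hchain, hchain.nodup_of_not_transGen_self hA⟩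

theorem exists_pathPartition_of_injOn [Fintype V] (hA : ∀ v, ¬ TransGen A v v) (X : Finset V)
    (hcA : ∀ v ∉ X, A v (c v)) (hc : Set.InjOn c (↑X)ᶜ) :
    ∃ P : Finset (List V), (∀ p ∈ P, IsPathIn A p ∧ EndsIn X p) ∧ PairwiseDisj P ∧
      ∀ v, ∃ p ∈ P, v ∈ p := by
  classical
  set S : Set V := (↑X)ᶜ
  have hwf : WellFounded (flip A) :=
    Finite.wellFounded_of_not_transGen_self fun v h => hA v (transGen_swap.mp h)
  choose m hmX hmS using exists_iterate_notMem_of_wellFounded hwf hcA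
  let path (v : V) : List V := List.iterate c v (m v + 1)
  have mem_path {u v : V} : u ∈ path v ↔ ∃ i ≤ m v, c^[i] v = u := by
    simp only [path, List.mem_iterate, Nat.lt_succ_iff, eq_comm]
  refine ⟨(Finset.univ.filter (· ∉ c '' S)).image path, ?_, ?_, ?_⟩
  · simp only [Finset.mem_image, Finset.mem_filter, forall_exists_index, and_imp]
    rintro _ v - - rfl
    exact ⟨isPathIn_iterate hA hcA (hmS v), _, not_not.mp (hmX v),
      List.getLast?_iterate_succ c v (m v)⟩
  · simp only [PairwiseDisj, Finset.mem_image, Finset.mem_filter]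
    rintro _ ⟨v, ⟨-, hv⟩, rfl⟩ _ ⟨w, ⟨-, hw⟩, rfl⟩ hne u hu hu'
    obtain ⟨i, hi, rfl⟩ := mem_path.mp hu
    obtain ⟨j, hj, hij⟩ := mem_path.mp hu'
    exact hne <| congrArg path <| eq_of_iterate_eq_of_injOn hc hv hw
      (fun k hk => hmS v k (by omega)) (fun k hk => hmS w k (by omega)) hij.symm
  · intro u
    obtain ⟨v, hv, i, hi, rfl⟩ :=
      exists_iterate_eq_of_wellFounded (Finite.wellFounded_of_not_transGen_self hA) hcA u
    refine ⟨path v, Finset.mem_image_of_mem _ (Finset.mem_filter.mpr ⟨Finset.mem_univ v, hv⟩),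
      mem_path.mpr ⟨i, ?_, rfl⟩⟩
    by_contra! hlt
    exact hi _ hlt (not_not.mp (hmX v))

theorem PairwiseDisj.existsUnique_mem {P : Finset (List V)} (hP : PairwiseDisj P) {v : V}
    (hv : ∃ p ∈ P, v ∈ p) : ∃! p, p ∈ P ∧ v ∈ p := by
  obtain ⟨p, hp, hvp⟩ := hv
  exact ⟨p, ⟨hp, hvp⟩, fun q ⟨hq, hvq⟩ => by_contra fun hne => hP q hq p hp hne v hvq hvp⟩

end SuccessorPaths

namespace PhyloNet

variable {V : Type*} [Fintype V] [DecidableEq V] (N : PhyloNet V)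

theorem not_arc_root (u : V) : ¬ N.Arc u N.root :=
  fun h => N.acyclic _ (TransGen.tail' (N.reach u) h)

theorem exists_arc_of_ne_root {v : V} (hv : v ≠ N.root) : ∃ u, N.Arc u v := by
  rcases (N.reach v).cases_tail with h | ⟨u, -, hu⟩
  exacts [absurd h hv, ⟨u, hu⟩]

end PhyloNet

section TreeBased

variable {V : Type*} [Fintype V] [DecidableEq V] {N : PhyloNet V}

theorem IsRSTree.inDeg_le_one {T : V → V → Prop} (hT : IsRSTree N T) (v : V) :
    inDeg T v ≤ 1 := by
  by_cases hv : v = N.root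
  · rw [(hT.2.1 v).mpr hv]
    exact zero_le_one
  · rw [hT.2.2 v hv]

theorem TreeBased.exists_pathPartition (hN : TreeBased N) : ∃ P, IsPathPartition N P := by
  obtain ⟨T, hT, hleaf⟩ := hN
  have hchild : ∀ v ∉ N.X, ∃ u, T v u := fun v hv =>
    Set.nonempty_of_ncard_ne_zero fun h => hv (hleaf v h)
  choose! c hc using hchild
  refine exists_pathPartition_of_injOn N.acyclic N.X (fun v hv => hT.1 _ _ (hc v hv)) ?_
  intro a ha b hb hab
  exact (Set.ncard_le_one (Set.toFinite _)).mp (hT.inDeg_le_one (c a)) a (hc a ha) b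
    (hab ▸ hc b hb)

theorem treeBased_of_parent (par : V → V) (harc : ∀ v ≠ N.root, N.Arc (par v) v)
    (hleaf : ∀ v ∉ N.X, ∃ w ≠ N.root, par w = v) : TreeBased N := by
  have hdeg (v : V) :
      inDeg (fun u w => w ≠ N.root ∧ u = par w) v = if v = N.root then 0 else 1 := by
    split_ifs with hv <;> simp [inDeg, hv]
  refine ⟨fun u w => w ≠ N.root ∧ u = par w, ⟨?_, fun v => ?_, fun v hv => ?_⟩, fun v hv => ?_⟩
  · rintro u w ⟨hw, rfl⟩
    exact harc w hw
  · rw [hdeg]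
    split_ifs <;> simp_all
  · rw [hdeg, if_neg hv]
  · by_contra hvX
    obtain ⟨w, hw, rfl⟩ := hleaf v hvX
    exact (Set.ncard_eq_zero (Set.toFinite _)).mp hv |>.subset ⟨hw, rfl⟩

theorem treeBased_of_existsUnique_mem {P : Finset (List V)}
    (hP : ∀ p ∈ P, IsPathIn N.Arc p ∧ EndsIn N.X p) (huniq : ∀ v, ∃! p, p ∈ P ∧ v ∈ p) :
    TreeBased N := by
  have hpar (v : V) :
      ∃ u, v ≠ N.root → N.Arc u v ∧ ∀ p ∈ P, ∀ u', [u', v] <:+: p → u' = u := by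
    by_cases hv : v = N.root
    · exact ⟨v, fun h => absurd hv h⟩
    by_cases hpred : ∃ p ∈ P, ∃ u, [u, v] <:+: p
    · obtain ⟨p, hp, u, hu⟩ := hpred
      obtain ⟨⟨-, hchain, hnodup⟩, -⟩ := hP p hp
      refine ⟨u, fun _ => ⟨List.isChain_pair.mp (hchain.infix hu), fun q hq u' hu' => ?_⟩⟩
      obtain rfl : q = p :=
        (huniq v).unique ⟨hq, hu'.subset (by simp)⟩ ⟨hp, hu.subset (by simp)⟩
      exact hnodup.eq_of_pair_infix hu' hu
    · push Not at hpred
      obtain ⟨u, hu⟩ := N.exists_arc_of_ne_root hv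
      exact ⟨u, fun _ => ⟨hu, fun p hp u' h => absurd h (hpred p hp u')⟩⟩
  choose par hpar using hpar
  refine treeBased_of_parent par (fun v hv => (hpar v hv).1) fun v hvX => ?_
  obtain ⟨p, ⟨hp, hvp⟩, -⟩ := huniq v
  obtain ⟨⟨-, hchain, -⟩, x, hx, hlast⟩ := hP p hp
  obtain ⟨w, hw⟩ := List.exists_pair_infix_of_getLast?_ne hvp
    (by rw [hlast]; rintro ⟨⟩; exact hvX hx)
  have hvw : N.Arc v w := List.isChain_pair.mp (hchain.infix hw)
  have hw_root : w ≠ N.root := by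
    rintro rfl
    exact N.not_arc_root v hvw
  exact ⟨w, hw_root, ((hpar w hw_root).2 p hp v hw).symm⟩

end TreeBased

/-- tree-based iff for every subset `U` of vertices there are
pairwise vertex-disjoint paths ending at leaves in `X` with each element of `U`
on exactly one path. -/
theorem stmt4 {V : Type*} [Fintype V] [DecidableEq V] (N : PhyloNet V) :
    TreeBased N ↔
      ∀ U : Finset V, ∃ P : Finset (List V),
        (∀ p ∈ P, IsPathIn N.Arc p ∧ EndsIn N.X p) ∧ PairwiseDisj P ∧
        ∀ u ∈ U, ∃! p : List V, p ∈ P ∧ u ∈ p := by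
  constructor
  · intro hN _
    obtain ⟨P, hP, hdisj, hcover⟩ := hN.exists_pathPartition
    exact ⟨P, hP, hdisj, fun u _ => hdisj.existsUnique_mem (hcover u)⟩
  · intro h
    obtain ⟨P, hP, -, huniq⟩ := h Finset.univ
    exact treeBased_of_existsUnique_mem hP fun v => huniq v (Finset.mem_univ v)
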